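/- Let A be an n×n irreducible completely positive matrix of rank 2. Then A has a unique CP representation if and only if A has a zero off-diagonal entry a_{ij} = 0 (i ≠ j) such that row i and column j of A are nonzero. Moreover if A has no such zero off-diagonal entry, then A has infinitely many minimal CP representations. -/

import Mathlib

open Matrix

/-- A CP representation of `A`: a multiset of nonnegative, nonzero, pairwise linearly
independent vectors whose rank-one outer products sum to `A`. Counted as a multiset,
i.e. up to reordering of the summands (columns). -/
def IsCPRep {n : ℕ} (A : Matrix (Fin n) (Fin n) ℝ) (L : Multiset (Fin n → ℝ)) : Prop :=
  (∀ b ∈ L, ∀ i, 0 ≤ b i) ∧ (∀ b ∈ L, b ≠ 0) ∧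
  L.Pairwise (fun b c => LinearIndependent ℝ ![b, c]) ∧
  (L.map fun b => vecMulVec b b).sum = A

/-- `A` is completely positive. -/
def IsCP {n : ℕ} (A : Matrix (Fin n) (Fin n) ℝ) : Prop := ∃ L, IsCPRep A L

/-- The cp-rank: minimal number of rank-one summands in a CP representation. -/
noncomputable def cpRank {n : ℕ} (A : Matrix (Fin n) (Fin n) ℝ) : ℕ :=
  sInf {k | ∃ L, IsCPRep A L ∧ Multiset.card L = k}

/-- A minimal CP representation: a CP representation with `cpRank A` summands. -/
def IsMinCPRep {n : ℕ} (A : Matrix (Fin n) (Fin n) ℝ) (L : Multiset (Fin n → ℝ)) : Prop :=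
  IsCPRep A L ∧ Multiset.card L = cpRank A

/-- The graph of a symmetric matrix: `i ~ j` iff `i ≠ j` and `A i j ≠ 0`. -/
def matGraph {n : ℕ} (A : Matrix (Fin n) (Fin n) ℝ) : SimpleGraph (Fin n) where
  Adj i j := i ≠ j ∧ (A i j ≠ 0 ∨ A j i ≠ 0)
  symm := ⟨by intro _ _ h; exact ⟨h.1.symm, h.2.symm⟩⟩
  loopless := ⟨by intro _ h; exact h.1 rfl⟩

/-- The comparison matrix `M(A)`. -/
noncomputable def compMatrix {n : ℕ} (A : Matrix (Fin n) (Fin n) ℝ) : Matrix (Fin n) (Fin n) ℝ :=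
  fun i j => if i = j then |A i j| else -|A i j|

/-!
The rank of `∑ b bᵀ` is the dimension of the span of the vectors `b`, so when `A` has rank two
all summands of a CP representation lie in the plane spanned by any two of them.

If `a_ij = 0`, every summand vanishes at `i` or at `j`; in that plane this makes each summand a
multiple of one of two fixed summands, so the representation consists of exactly two vectors,
which are then read off from columns `i` and `j` of `A`.

If all entries are positive, `A` is the Gram matrix of the rows of a rank-two factorisation, and
these plane vectors lie pairwise at an acute angle. Rotating the extreme one onto an axis gives
`A = d₁d₁ᵀ + d₂d₂ᵀ` with `d₁ > 0` and `d₂ ≥ 0`, and every sufficiently small rotation of `(d₁, d₂)`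
is again nonnegative: infinitely many minimal CP representations.
-/

open Real Topology

lemma Multiset.Pairwise.rel_of_mem_erase {α : Type*} [DecidableEq α] {r : α → α → Prop}
    (hr : ∀ a b, r a b → r b a) {L : Multiset α} (hL : L.Pairwise r) {a b : α} (ha : a ∈ L)
    (hb : b ∈ L.erase a) : r a b := by
  obtain ⟨l, rfl, hl⟩ := hL
  rw [Multiset.coe_erase, Multiset.mem_coe] at hb
  exact List.rel_of_pairwise_cons (hl.perm (List.perm_cons_erase ha) (hr _ _)) hb

section LinearIndependentPair

variable {K V : Type*} [Field K] [AddCommGroup V] [Module K V]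

lemma Multiset.Pairwise.linearIndependent_pair_of_mem_erase [DecidableEq V] {L : Multiset V}
    (hL : L.Pairwise fun b c => LinearIndependent K ![b, c]) {a b : V} (ha : a ∈ L)
    (hb : b ∈ L.erase a) : LinearIndependent K ![a, b] :=
  hL.rel_of_mem_erase (fun _ _ => LinearIndependent.pair_symm_iff.1) ha hb

lemma not_linearIndependent_pair_smul (x : V) (a : K) : ¬ LinearIndependent K ![x, a • x] :=
  fun h => (LinearIndependent.pair_iff' (by simpa using h.ne_zero 0)).1 h a rfl

lemma Multiset.eq_pair_of_pairwise_linearIndependent [DecidableEq V] {L : Multiset V}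
    (hL : L.Pairwise fun b c => LinearIndependent K ![b, c]) {s t : V} (hs : s ∈ L)
    (ht : t ∈ L.erase s) (hmultiple : ∀ c ∈ L, (∃ a : K, c = a • s) ∨ ∃ a : K, c = a • t) :
    L = {s, t} := by
  suffices hrest : (L.erase s).erase t = 0 by
    rw [← Multiset.cons_erase hs, ← Multiset.cons_erase ht, hrest]
    rfl
  refine Multiset.eq_zero_of_forall_notMem fun c hc => ?_
  have hcs : c ∈ L.erase s := Multiset.mem_of_mem_erase hc
  have hct : c ∈ L.erase t := by
    rw [Multiset.erase_comm] at hc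
    exact Multiset.mem_of_mem_erase hc
  rcases hmultiple c (Multiset.mem_of_mem_erase hcs) with ⟨a, rfl⟩ | ⟨a, rfl⟩
  · exact not_linearIndependent_pair_smul s a (hL.linearIndependent_pair_of_mem_erase hs hcs)
  · exact not_linearIndependent_pair_smul t a
      (hL.linearIndependent_pair_of_mem_erase (Multiset.mem_of_mem_erase ht) hct)

end LinearIndependentPair

section SumOfOuterProducts

variable {ι : Type*}

lemma Multiset.sum_map_vecMulVec_self_eq_transpose_mul [Fintype ι] (L : Multiset (ι → ℝ)) :
    (L.map fun b => vecMulVec b b).sum =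
      (of fun x : L => (x : ι → ℝ))ᵀ * of fun x : L => (x : ι → ℝ) := by
  ext k l
  rw [← Multiset.map_univ, ← Finset.sum_eq_multiset_sum, Matrix.sum_apply]
  simp [Matrix.mul_apply, vecMulVec_apply]

theorem Matrix.rank_sum_vecMulVec_self [Fintype ι] (L : Multiset (ι → ℝ)) :
    ((L.map fun b => vecMulVec b b).sum).rank = Set.finrank ℝ {b | b ∈ L} := by
  have hrows : Set.range (of fun x : L => (x : ι → ℝ)).row = {b | b ∈ L} := by
    refine Set.ext fun b => ⟨?_, fun hb => ⟨L.mkToType b ⟨0, Multiset.count_pos.2 hb⟩, rfl⟩⟩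
    rintro ⟨x, rfl⟩
    exact Multiset.coe_mem
  rw [L.sum_map_vecMulVec_self_eq_transpose_mul, rank_transpose_mul_self,
    rank_eq_finrank_span_row, hrows]
  rfl

lemma linearIndependent_pair_of_rank_eq_two [Fintype ι] {u v : ι → ℝ}
    (h : (vecMulVec u u + vecMulVec v v).rank = 2) : LinearIndependent ℝ ![u, v] := by
  have hpair := rank_sum_vecMulVec_self ({u, v} : Multiset (ι → ℝ))
  have hset : {b | b ∈ ({u, v} : Multiset (ι → ℝ))} = Set.range ![u, v] := by
    rw [range_cons_cons_empty]
    ext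
    simp
  rw [linearIndependent_iff_card_eq_finrank_span, ← hset, ← hpair]
  simpa using h.symm

lemma exists_sum_map_vecMulVec_eq_gram {s t : ι → ℝ} {L : Multiset (ι → ℝ)}
    (hL : ∀ c ∈ L, c ∈ Submodule.span ℝ {s, t}) :
    ∃ p q r : ℝ, 0 ≤ p ∧ 0 ≤ r ∧ q ^ 2 ≤ p * r ∧
      (L.map fun c => vecMulVec c c).sum =
        p • vecMulVec s s + q • (vecMulVec s t + vecMulVec t s) + r • vecMulVec t t := by
  induction L using Multiset.induction_on with
  | empty => exact ⟨0, 0, 0, le_rfl, le_rfl, by norm_num, by simp⟩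
  | cons c M ih =>
    obtain ⟨p, q, r, hp, hr, hq, hsum⟩ := ih fun c hc => hL c (Multiset.mem_cons_of_mem hc)
    obtain ⟨α, β, rfl⟩ := Submodule.mem_span_pair.1 (hL c (Multiset.mem_cons_self c M))
    refine ⟨p + α * α, q + α * β, r + β * β, add_nonneg hp (mul_self_nonneg α),
      add_nonneg hr (mul_self_nonneg β), ?_, ?_⟩
    · -- Cauchy–Schwarz
      rcases hp.lt_or_eq with hp | rfl
      · nlinarith [sq_nonneg (p * β - q * α), mul_nonneg (sub_nonneg.2 hq) (sq_nonneg α)]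
      · obtain rfl : q = 0 := by nlinarith
        nlinarith [mul_nonneg hr (sq_nonneg α)]
    · rw [Multiset.map_cons, Multiset.sum_cons, hsum]
      ext k l
      simp only [Matrix.add_apply, Matrix.smul_apply, vecMulVec_apply, Pi.add_apply,
        Pi.smul_apply, smul_eq_mul]
      ring

lemma exists_vecMulVec_add_vecMulVec_eq_gram {p q r : ℝ} (hp : 0 ≤ p) (hr : 0 ≤ r)
    (hq : q ^ 2 ≤ p * r) (s t : ι → ℝ) :
    ∃ u v : ι → ℝ, p • vecMulVec s s + q • (vecMulVec s t + vecMulVec t s) + r • vecMulVec t t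
      = vecMulVec u u + vecMulVec v v := by
  rcases hp.lt_or_eq with hp | rfl
  · -- Cholesky factorisation of the Gram matrix `[[p, q], [q, r]]`
    obtain ⟨z, hz, rfl⟩ : ∃ z : ℝ, 0 < z ∧ z ^ 2 = p := ⟨√p, sqrt_pos.2 hp, sq_sqrt hp.le⟩
    obtain ⟨w, hw⟩ : ∃ w : ℝ, w ^ 2 = r - (q / z) ^ 2 := ⟨√_, sq_sqrt (by
      rw [sub_nonneg, div_pow, div_le_iff₀ (by positivity)]; linarith)⟩
    refine ⟨z • s + (q / z) • t, w • t, ?_⟩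
    ext k l
    simp only [Matrix.add_apply, Matrix.smul_apply, vecMulVec_apply, Pi.add_apply,
      Pi.smul_apply, smul_eq_mul]
    have hzz : z * z⁻¹ = 1 := mul_inv_cancel₀ hz.ne'
    linear_combination (-(t k * t l)) * hw - (s k * q * t l + s l * q * t k) * hzz
  · obtain rfl : q = 0 := by nlinarith
    refine ⟨0, √r • t, ?_⟩
    ext k l
    simp only [Matrix.add_apply, Matrix.smul_apply, vecMulVec_apply, Pi.smul_apply,
      Pi.zero_apply, smul_eq_mul]
    linear_combination (-(t k * t l)) * sq_sqrt hr

end SumOfOuterProducts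

section Rotation

variable {ι : Type*}

lemma exists_pos_nonneg_of_forall_apply_pos [Fintype ι] [Nonempty ι] {A : Matrix ι ι ℝ}
    {u v : ι → ℝ} (hA : A = vecMulVec u u + vecMulVec v v) (hpos : ∀ k l, 0 < A k l) :
    ∃ d₁ d₂ : ι → ℝ, (∀ k, 0 < d₁ k) ∧ 0 ≤ d₂ ∧ A = vecMulVec d₁ d₁ + vecMulVec d₂ d₂ := by
  have hA' : ∀ k l, A k l = u k * u l + v k * v l := by simp [hA, vecMulVec_apply]
  -- `A k l` is the inner product of the plane vectors `(u k, v k)` and `(u l, v l)`. The vector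
  -- `a` is the extreme one in angular order (measured by the tangent of the angle from `i`);
  -- rotating it onto the first axis puts all the others in the upper half-plane.
  obtain ⟨i, -⟩ := Finset.univ_nonempty (α := ι)
  obtain ⟨a, -, ha⟩ := Finset.univ.exists_max_image
    (fun k => (u i * v k - v i * u k) / A i k) Finset.univ_nonempty
  have hcross : ∀ k, 0 ≤ u k * v a - v k * u a := by
    intro k
    have hk := (div_le_div_iff₀ (hpos i k) (hpos i a)).1 (ha k (Finset.mem_univ k))
    refine (mul_nonneg_iff_of_pos_left (hpos i i)).1 ?_
    rw [hA' i k, hA' i a] at hk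
    rw [hA' i i]
    linear_combination hk
  have haa := hpos a a
  refine ⟨fun k => A a k / √(A a a), fun k => (u k * v a - v k * u a) / √(A a a),
    fun k => div_pos (hpos a k) (sqrt_pos.2 haa), fun k => div_nonneg (hcross k) (sqrt_nonneg _),
    ?_⟩
  ext k l
  have hs := sq_sqrt haa.le
  have hs0 := (sqrt_pos.2 haa).ne'
  simp only [Matrix.add_apply, vecMulVec_apply]
  field_simp
  rw [hs, hA' a a, hA' a k, hA' a l, hA' k l]
  ring

lemma vecMulVec_rotation_add (d₁ d₂ : ι → ℝ) (θ : ℝ) :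
    vecMulVec (cos θ • d₁ - sin θ • d₂) (cos θ • d₁ - sin θ • d₂)
      + vecMulVec (sin θ • d₁ + cos θ • d₂) (sin θ • d₁ + cos θ • d₂)
      = vecMulVec d₁ d₁ + vecMulVec d₂ d₂ := by
  ext k l
  simp only [Matrix.add_apply, vecMulVec_apply, Pi.add_apply, Pi.sub_apply, Pi.smul_apply,
    smul_eq_mul]
  linear_combination (d₁ k * d₁ l + d₂ k * d₂ l) * sin_sq_add_cos_sq θ

lemma eventually_rotation_nonneg [Finite ι] {d₁ : ι → ℝ} (hd₁ : ∀ k, 0 < d₁ k) (d₂ : ι → ℝ) :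
    ∀ᶠ θ in 𝓝 0, 0 ≤ cos θ • d₁ - sin θ • d₂ := by
  have hk : ∀ k, ∀ᶠ θ in 𝓝 (0 : ℝ), 0 < cos θ * d₁ k - sin θ * d₂ k := fun k =>
    ((by fun_prop : Continuous fun θ => cos θ * d₁ k - sin θ * d₂ k).tendsto 0).eventually_const_lt
      (by simpa using hd₁ k)
  filter_upwards [Filter.eventually_all.2 hk] with θ hθ k
  simpa using (hθ k).le

lemma injOn_rotation {V : Type*} [AddCommGroup V] [Module ℝ V] {d₁ d₂ : V}
    (h : LinearIndependent ℝ ![d₁, d₂]) :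
    Set.InjOn (fun θ => ({cos θ • d₁ - sin θ • d₂, sin θ • d₁ + cos θ • d₂} : Multiset V))
      (Set.Ioo 0 (π / 2)) := by
  intro θ hθ θ' hθ' heq
  have hmem : cos θ • d₁ + (-sin θ) • d₂ ∈
      ({cos θ' • d₁ + (-sin θ') • d₂, sin θ' • d₁ + cos θ' • d₂} : Multiset V) := by
    dsimp only at heq
    simp only [neg_smul, ← sub_eq_add_neg]
    rw [← heq]
    exact Multiset.mem_cons_self _ _
  have hθ₀ : θ ∈ Set.Icc 0 π := ⟨hθ.1.le, by linarith [hθ.2, pi_pos]⟩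
  have hθ'₀ : θ' ∈ Set.Icc 0 π := ⟨hθ'.1.le, by linarith [hθ'.2, pi_pos]⟩
  rw [Multiset.insert_eq_cons, Multiset.mem_cons, Multiset.mem_singleton] at hmem
  rcases hmem with h' | h'
  · exact injOn_cos hθ₀ hθ'₀ (h.eq_of_pair h').1
  · have hsin := sin_pos_of_pos_of_lt_pi hθ.1 (by linarith [hθ.2, pi_pos])
    have hcos := cos_pos_of_mem_Ioo ⟨by linarith [hθ'.1, pi_pos], hθ'.2⟩
    linarith [(h.eq_of_pair h').2]

end Rotation

lemma isCPRep_pair {n : ℕ} {A : Matrix (Fin n) (Fin n) ℝ} {u v : Fin n → ℝ} (hu : 0 ≤ u)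
    (hv : 0 ≤ v) (hA : A = vecMulVec u u + vecMulVec v v) (hrank : A.rank = 2) :
    IsCPRep A {u, v} := by
  have hli := linearIndependent_pair_of_rank_eq_two (hA ▸ hrank)
  refine ⟨?_, ?_, ⟨[u, v], rfl, by simpa using hli⟩, by simp [hA]⟩
  · simpa using ⟨hu, hv⟩
  · simpa using ⟨hli.ne_zero 0, hli.ne_zero 1⟩

namespace IsCPRep

variable {n : ℕ} {A : Matrix (Fin n) (Fin n) ℝ} {L : Multiset (Fin n → ℝ)}

lemma apply_eq_sum (hL : IsCPRep A L) (k l : Fin n) : A k l = (L.map fun c => c k * c l).sum := by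
  rw [← hL.2.2.2]
  exact (map_multiset_sum (entryAddMonoidHom ℝ k l) _).trans (by rw [Multiset.map_map]; rfl)

lemma apply_nonneg (hL : IsCPRep A L) (k l : Fin n) : 0 ≤ A k l := by
  rw [hL.apply_eq_sum]
  exact Multiset.sum_nonneg fun x hx => by
    obtain ⟨c, hc, rfl⟩ := Multiset.mem_map.1 hx
    exact mul_nonneg (hL.1 c hc k) (hL.1 c hc l)

lemma mul_eq_zero_of_apply_eq_zero (hL : IsCPRep A L) {k l : Fin n} (h : A k l = 0) :
    ∀ c ∈ L, c k * c l = 0 := by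
  have hterms : ∀ x ∈ L.map fun c => c k * c l, 0 ≤ x := fun x hx => by
    obtain ⟨c, hc, rfl⟩ := Multiset.mem_map.1 hx
    exact mul_nonneg (hL.1 c hc k) (hL.1 c hc l)
  intro c hc
  refine le_antisymm ?_ (mul_nonneg (hL.1 c hc k) (hL.1 c hc l))
  rw [← h, hL.apply_eq_sum]
  exact Multiset.single_le_sum hterms _ (Multiset.mem_map_of_mem _ hc)

lemma apply_eq_zero_of_forall_apply_eq_zero (hL : IsCPRep A L) {i : Fin n}
    (h : ∀ c ∈ L, c i = 0) (l : Fin n) : A i l = 0 ∧ A l i = 0 := by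
  simp only [hL.apply_eq_sum]
  constructor <;> exact Multiset.sum_eq_zero fun x hx => by
    obtain ⟨c, hc, rfl⟩ := Multiset.mem_map.1 hx
    simp [h c hc]

lemma apply_self_pos [Nontrivial (Fin n)] (hL : IsCPRep A L) (hG : (matGraph A).Preconnected)
    (i : Fin n) : 0 < A i i := by
  refine (hL.apply_nonneg i i).lt_of_ne' fun hii => ?_
  have hrow := hL.apply_eq_zero_of_forall_apply_eq_zero fun c hc =>
    mul_self_eq_zero.1 (hL.mul_eq_zero_of_apply_eq_zero hii c hc)
  obtain ⟨j, -, hij⟩ := hG.exists_adj_of_nontrivial i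
  exact hij.elim (· (hrow j).1) (· (hrow j).2)

lemma rank_eq_finrank (hL : IsCPRep A L) : A.rank = Set.finrank ℝ {b | b ∈ L} :=
  hL.2.2.2 ▸ rank_sum_vecMulVec_self L

lemma rank_le_card (hL : IsCPRep A L) : A.rank ≤ Multiset.card L := by
  classical
  rw [hL.rank_eq_finrank, show {b | b ∈ L} = (L.toFinset : Set (Fin n → ℝ)) by ext; simp]
  exact (finrank_span_finset_le_card _).trans (Multiset.toFinset_card_le L)

lemma cpRank_eq_rank (hL : IsCPRep A L) (hcard : Multiset.card L = A.rank) :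
    cpRank A = A.rank :=
  le_antisymm (Nat.sInf_le ⟨L, hL, hcard⟩)
    (le_csInf ⟨_, L, hL, hcard⟩ fun _ ⟨_, hL', hk⟩ => hk ▸ hL'.rank_le_card)

lemma mem_span_pair [DecidableEq (Fin n → ℝ)] (hL : IsCPRep A L) (hrank : A.rank = 2)
    {s t : Fin n → ℝ} (hs : s ∈ L) (ht : t ∈ L.erase s) :
    ∀ c ∈ L, c ∈ Submodule.span ℝ {s, t} := by
  have hst : LinearIndependent ℝ ![s, t] := hL.2.2.1.linearIndependent_pair_of_mem_erase hs ht
  have hspan : Submodule.span ℝ {s, t} = Submodule.span ℝ {b | b ∈ L} := by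
    refine Submodule.eq_of_le_of_finrank_le (Submodule.span_mono ?_) ?_
    · exact Set.insert_subset hs (Set.singleton_subset_iff.2 (Multiset.mem_of_mem_erase ht))
    · rw [← Set.finrank, ← hL.rank_eq_finrank, hrank, ← range_cons_cons_empty s t ![],
        finrank_span_eq_card hst, Fintype.card_fin]
  intro c hc
  rw [hspan]
  exact Submodule.subset_span hc

lemma exists_eq_vecMulVec_add_vecMulVec (hL : IsCPRep A L) (hrank : A.rank = 2) :
    ∃ u v : Fin n → ℝ, A = vecMulVec u u + vecMulVec v v := by
  classical
  have hcard := hrank ▸ hL.rank_le_card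
  obtain ⟨s, hs⟩ := Multiset.card_pos_iff_exists_mem.1 (by omega : 0 < Multiset.card L)
  have hcard' := Multiset.card_erase_add_one hs
  obtain ⟨t, ht⟩ := Multiset.card_pos_iff_exists_mem.1 (by omega : 0 < Multiset.card (L.erase s))
  obtain ⟨p, q, r, hp, hr, hq, hsum⟩ :=
    exists_sum_map_vecMulVec_eq_gram (hL.mem_span_pair hrank hs ht)
  obtain ⟨u, v, huv⟩ := exists_vecMulVec_add_vecMulVec_eq_gram hp hr hq s t
  exact ⟨u, v, hL.2.2.2.symm.trans (hsum.trans huv)⟩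

theorem eq_pair_of_apply_eq_zero (hL : IsCPRep A L) (hrank : A.rank = 2) {i j : Fin n}
    (hi : 0 < A i i) (hj : 0 < A j j) (hij : A i j = 0) :
    L = {fun k => A k i / √(A i i), fun k => A k j / √(A j j)} := by
  classical
  have hprod := hL.mul_eq_zero_of_apply_eq_zero hij
  have hsupp : ∀ m, 0 < A m m → ∃ s ∈ L, s m ≠ 0 := fun m hm => by
    by_contra! h
    exact hm.ne' (hL.apply_eq_zero_of_forall_apply_eq_zero h m).1
  obtain ⟨s, hs, hsi⟩ := hsupp i hi
  obtain ⟨t, ht, htj⟩ := hsupp j hj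
  have hsj : s j = 0 := (mul_eq_zero.1 (hprod s hs)).resolve_left hsi
  have hti : t i = 0 := (mul_eq_zero.1 (hprod t ht)).resolve_right htj
  have ht' : t ∈ L.erase s := (Multiset.mem_erase_of_ne fun h : t = s => hsi (h ▸ hti)).2 ht
  have hLst : L = {s, t} := by
    refine Multiset.eq_pair_of_pairwise_linearIndependent hL.2.2.1 hs ht' fun c hc => ?_
    obtain ⟨a, b, rfl⟩ := Submodule.mem_span_pair.1 (hL.mem_span_pair hrank hs ht' c hc)
    have hab : a * b * (s i * t j) = 0 := by
      have := hprod _ hc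
      simp only [Pi.add_apply, Pi.smul_apply, smul_eq_mul, hsj, hti] at this
      linear_combination this
    rcases mul_eq_zero.1 ((mul_eq_zero.1 hab).resolve_right (mul_ne_zero hsi htj)) with rfl | rfl
    · exact Or.inr ⟨b, by simp⟩
    · exact Or.inl ⟨a, by simp⟩
  have hcolumn : ∀ x ∈ L, ∀ m, x m ≠ 0 → (∀ k, A k m = x k * x m) →
      x = fun k => A k m / √(A m m) := by
    intro x hx m hxm hA
    have hpos : 0 < x m := (hL.1 x hx m).lt_of_ne' hxm
    funext k
    rw [hA k, hA m, sqrt_mul_self hpos.le, mul_div_cancel_right₀ _ hpos.ne']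
  have hA : ∀ k l, A k l = s k * s l + t k * t l := by
    intro k l
    simp [hL.apply_eq_sum, hLst]
  rw [hLst, hcolumn s hs i hsi fun k => by simp [hA, hti],
    hcolumn t ht j htj fun k => by simp [hA, hsj]]

theorem infinite_setOf_isMinCPRep (hL : IsCPRep A L) (hrank : A.rank = 2)
    (hpos : ∀ k l, 0 < A k l) : {L | IsMinCPRep A L}.Infinite := by
  have : Nonempty (Fin n) := ⟨⟨0, by have := hrank ▸ A.rank_le_height; omega⟩⟩
  obtain ⟨u, v, huv⟩ := hL.exists_eq_vecMulVec_add_vecMulVec hrank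
  obtain ⟨d₁, d₂, hd₁, hd₂, hd⟩ := exists_pos_nonneg_of_forall_apply_pos huv hpos
  have hli : LinearIndependent ℝ ![d₁, d₂] := linearIndependent_pair_of_rank_eq_two (hd ▸ hrank)
  obtain ⟨ε, hε, hrot⟩ := Metric.eventually_nhds_iff.1 (eventually_rotation_nonneg hd₁ d₂)
  have hrep : ∀ θ ∈ Set.Ioo 0 (min ε (π / 2)),
      IsCPRep A {cos θ • d₁ - sin θ • d₂, sin θ • d₁ + cos θ • d₂} := by
    rintro θ ⟨hθ₀, hθ⟩
    have hθε := hθ.trans_le (min_le_left _ _)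
    have hθπ := hθ.trans_le (min_le_right _ _)
    refine isCPRep_pair (hrot ?_) ?_ (hd.trans (vecMulVec_rotation_add d₁ d₂ θ).symm) hrank
    · rwa [Real.dist_eq, sub_zero, abs_of_pos hθ₀]
    · have hsin := sin_nonneg_of_nonneg_of_le_pi hθ₀.le (by linarith [pi_pos])
      have hcos := cos_nonneg_of_mem_Icc ⟨by linarith [pi_pos], hθπ.le⟩
      intro k
      simpa using add_nonneg (mul_nonneg hsin (hd₁ k).le) (mul_nonneg hcos (hd₂ k))
  have hδ : 0 < min ε (π / 2) := lt_min hε (by positivity)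
  have hcpRank : cpRank A = 2 :=
    hrank ▸ (hrep _ ⟨half_pos hδ, half_lt_self hδ⟩).cpRank_eq_rank (by simp [hrank])
  refine Set.infinite_of_injOn_mapsTo
    ((injOn_rotation hli).mono (Set.Ioo_subset_Ioo_right (min_le_right _ _)))
    (fun θ hθ => ⟨hrep θ hθ, by simp [hcpRank]⟩) (Set.Ioo_infinite hδ)

end IsCPRep

/-- An irreducible rank-2 completely positive matrix has a unique CP representation iff
it has a zero off-diagonal entry in a nonzero row and column; if it has no such zero
entry, it has infinitely many minimal CP representations. -/
theorem stmt_4 (n : ℕ) (A : Matrix (Fin n) (Fin n) ℝ) (hCP : IsCP A)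
    (hirr : (matGraph A).Connected) (hrank : A.rank = 2) :
    ((∃! L, IsCPRep A L) ↔
      ∃ i j, i ≠ j ∧ A i j = 0 ∧ (∃ l, A i l ≠ 0) ∧ (∃ l, A l j ≠ 0)) ∧
    ((¬ ∃ i j, i ≠ j ∧ A i j = 0 ∧ (∃ l, A i l ≠ 0) ∧ (∃ l, A l j ≠ 0)) →
      {L | IsMinCPRep A L}.Infinite) := by
  obtain ⟨L₀, hL₀⟩ := hCP
  have : Nontrivial (Fin n) := Fin.nontrivial_iff_two_le.2 (hrank ▸ A.rank_le_height)
  have hdiag := hL₀.apply_self_pos hirr.preconnected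
  have hinfinite : (¬ ∃ i j, i ≠ j ∧ A i j = 0 ∧ (∃ l, A i l ≠ 0) ∧ (∃ l, A l j ≠ 0)) →
      {L | IsMinCPRep A L}.Infinite := by
    refine fun hzero => hL₀.infinite_setOf_isMinCPRep hrank fun k l => ?_
    obtain rfl | hkl := eq_or_ne k l
    · exact hdiag k
    · exact (hL₀.apply_nonneg k l).lt_of_ne' fun h =>
        hzero ⟨k, l, hkl, h, ⟨k, (hdiag k).ne'⟩, ⟨l, (hdiag l).ne'⟩⟩
  refine ⟨⟨fun huniq => ?_, fun ⟨i, j, _, hij, _⟩ => ?_⟩, hinfinite⟩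
  · by_contra hzero
    obtain ⟨L₁, hL₁, L₂, hL₂, hne⟩ := (hinfinite hzero).nontrivial
    exact hne (huniq.unique hL₁.1 hL₂.1)
  · have hpair := fun L (hL : IsCPRep A L) =>
      hL.eq_pair_of_apply_eq_zero hrank (hdiag i) (hdiag j) hij
    exact ⟨L₀, hL₀, fun L hL => (hpair L hL).trans (hpair L₀ hL₀).symm⟩
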